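/- (Lie invariance of the curvature.) Let Γ be a smooth affine connection on U (no symmetry assumed) and v a smooth vector field such that the Lie derivative of the connection vanishes at every point: (ℒ_v Γ)^α_{μν} := v^σ ∂_σ Γ^α_{μν} − Γ^σ_{μν} ∂_σ v^α + Γ^α_{σν} ∂_μ v^σ + Γ^α_{μσ} ∂_ν v^σ + ∂_μ ∂_ν v^α = 0. Then the Lie derivative of the curvature tensor vanishes at every point of U: (ℒ_v R)^α{}_{βμν} := v^σ ∂_σ R^α{}_{βμν} − R^σ{}_{βμν} ∂_σ v^α + R^α{}_{σμν} ∂_β v^σ + R^α{}_{βσν} ∂_μ v^σ + R^α{}_{βμσ} ∂_ν v^σ = 0, where R^α{}_{βμν} := ∂_μ Γ^α_{νβ} − ∂_ν Γ^α_{μβ} + Γ^α_{μσ} Γ^σ_{νβ} − Γ^α_{νσ} Γ^σ_{μβ}. -/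

import Mathlib

/-! Common setup: fields on an open subset `U` of `ℝ⁴`, coordinates indexed by `Fin 4`,
partial derivatives `pd`, covariant derivatives, torsion, the intrinsic objects
`ω`, `Θ`, the compatible connection `^{v,τ}Γ` and the Coriolis field. -/

abbrev Vec4 : Type := Fin 4 → ℝ
abbrev Tens1 : Type := Vec4 → Fin 4 → ℝ
abbrev Tens2 : Type := Vec4 → Fin 4 → Fin 4 → ℝ
abbrev Tens3 : Type := Vec4 → Fin 4 → Fin 4 → Fin 4 → ℝ

/-- μ-th partial derivative -/
noncomputable def pd (μ : Fin 4) (f : Vec4 → ℝ) (x : Vec4) : ℝ :=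
  fderiv ℝ f x (Pi.single μ 1)

/-- ∇_μ τ_ν := ∂_μ τ_ν − Γ^σ_{μν} τ_σ -/
noncomputable def covOne (Γ : Tens3) (τ : Tens1) (x : Vec4) (μ ν : Fin 4) : ℝ :=
  pd μ (fun y => τ y ν) x - ∑ σ, Γ x σ μ ν * τ x σ

/-- ∇_μ v^ν := ∂_μ v^ν + Γ^ν_{μσ} v^σ -/
noncomputable def covVec (Γ : Tens3) (v : Tens1) (x : Vec4) (μ ν : Fin 4) : ℝ :=
  pd μ (fun y => v y ν) x + ∑ σ, Γ x ν μ σ * v x σ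

/-- ∇_α γ_{μν} := ∂_α γ_{μν} − Γ^σ_{αμ} γ_{σν} − Γ^σ_{αν} γ_{μσ} -/
noncomputable def covLow (Γ : Tens3) (γ : Tens2) (x : Vec4) (α μ ν : Fin 4) : ℝ :=
  pd α (fun y => γ y μ ν) x - ∑ σ, Γ x σ α μ * γ x σ ν - ∑ σ, Γ x σ α ν * γ x μ σ

/-- ∇_α h^{μν} := ∂_α h^{μν} + Γ^μ_{ασ} h^{σν} + Γ^ν_{ασ} h^{μσ} -/
noncomputable def covUp (Γ : Tens3) (h : Tens2) (x : Vec4) (α μ ν : Fin 4) : ℝ :=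
  pd α (fun y => h y μ ν) x + ∑ σ, Γ x μ α σ * h x σ ν + ∑ σ, Γ x ν α σ * h x μ σ

/-- Torsion T^α_{μν} := Γ^α_{μν} − Γ^α_{νμ} -/
def torsion (Γ : Tens3) (x : Vec4) (α μ ν : Fin 4) : ℝ :=
  Γ x α μ ν - Γ x α ν μ

/-- ω_{μν} := (1/2)(∂_μ τ_ν − ∂_ν τ_μ) -/
noncomputable def omega2 (τ : Tens1) (x : Vec4) (μ ν : Fin 4) : ℝ :=
  (1/2) * (pd μ (fun y => τ y ν) x - pd ν (fun y => τ y μ) x)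

/-- Θ_{μν} := (1/2)(v^σ ∂_σ γ_{μν} + γ_{σν} ∂_μ v^σ + γ_{μσ} ∂_ν v^σ) -/
noncomputable def theta2 (v : Tens1) (γ : Tens2) (x : Vec4) (μ ν : Fin 4) : ℝ :=
  (1/2) * (∑ σ, v x σ * pd σ (fun y => γ y μ ν) x
    + ∑ σ, γ x σ ν * pd μ (fun y => v y σ) x
    + ∑ σ, γ x μ σ * pd ν (fun y => v y σ) x)

/-- The compatible connection ^{v,τ}Γ^α_{μν} -/
noncomputable def compatConn (v τ : Tens1) (γ h : Tens2) : Tens3 := fun x α μ ν =>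
  ∑ σ, h x α σ * ((1/2) * pd μ (fun y => γ y ν σ) x + (1/2) * pd ν (fun y => γ y μ σ) x
    - (1/2) * pd σ (fun y => γ y μ ν) x)
  + (1/2) * v x α * (pd μ (fun y => τ y ν) x + pd ν (fun y => τ y μ) x)

/-- Coriolis field κ_{μν} := (1/2)(γ_{να} ∇_μ v^α − γ_{μα} ∇_ν v^α) -/
noncomputable def coriolis (Γ : Tens3) (v : Tens1) (γ : Tens2) (x : Vec4) (μ ν : Fin 4) : ℝ :=
  (1/2) * (∑ α, γ x ν α * covVec Γ v x μ α - ∑ α, γ x μ α * covVec Γ v x ν α)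

/-- Smoothness of a rank-1 field on U -/
def Smooth1 (τ : Tens1) (U : Set Vec4) : Prop := ∀ ν, ContDiffOn ℝ (⊤ : ℕ∞) (fun x => τ x ν) U
/-- Smoothness of a rank-2 field on U -/
def Smooth2 (γ : Tens2) (U : Set Vec4) : Prop := ∀ μ ν, ContDiffOn ℝ (⊤ : ℕ∞) (fun x => γ x μ ν) U
/-- Smoothness of connection coefficients on U -/
def Smooth3 (Γ : Tens3) (U : Set Vec4) : Prop := ∀ α μ ν, ContDiffOn ℝ (⊤ : ℕ∞) (fun x => Γ x α μ ν) U

/-- Kronecker delta -/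
def kron (μ ν : Fin 4) : ℝ := if μ = ν then 1 else 0

/-- The duality relations: τ_μ v^μ = 1, h^{μν} τ_ν = 0, γ_{μν} v^ν = 0,
h^{μσ} γ_{σν} = δ^μ_ν − v^μ τ_ν, together with symmetry of γ and h. -/
def DualityOn (τ v : Tens1) (γ h : Tens2) (U : Set Vec4) : Prop :=
  ∀ x ∈ U, (∀ μ ν, γ x μ ν = γ x ν μ) ∧ (∀ μ ν, h x μ ν = h x ν μ) ∧
    (∑ μ, τ x μ * v x μ = 1) ∧
    (∀ μ, ∑ ν, h x μ ν * τ x ν = 0) ∧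
    (∀ μ, ∑ ν, γ x μ ν * v x ν = 0) ∧
    (∀ μ ν, ∑ σ, h x μ σ * γ x σ ν = kron μ ν - v x μ * τ x ν)

/-- Curvature R^α{}_{βμν} := ∂_μ Γ^α_{νβ} − ∂_ν Γ^α_{μβ} + Γ^α_{μσ} Γ^σ_{νβ} − Γ^α_{νσ} Γ^σ_{μβ}. -/
noncomputable def curv (Γ : Tens3) (x : Vec4) (α β μ ν : Fin 4) : ℝ :=
  pd μ (fun y => Γ y α ν β) x - pd ν (fun y => Γ y α μ β) x
  + ∑ σ, Γ x α μ σ * Γ x σ ν β - ∑ σ, Γ x α ν σ * Γ x σ μ β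

/-- Lie derivative of a connection along `v`. -/
noncomputable def lieConn (v : Tens1) (Γ : Tens3) (x : Vec4) (α μ ν : Fin 4) : ℝ :=
  (∑ σ, v x σ * pd σ (fun y => Γ y α μ ν) x)
  - (∑ σ, Γ x σ μ ν * pd σ (fun y => v y α) x)
  + (∑ σ, Γ x α σ ν * pd μ (fun y => v y σ) x)
  + (∑ σ, Γ x α μ σ * pd ν (fun y => v y σ) x)
  + pd μ (fun y => pd ν (fun z => v z α) y) x

/-- Lie derivative of the curvature along `v`. -/
noncomputable def lieCurv (v : Tens1) (Γ : Tens3) (x : Vec4) (α β μ ν : Fin 4) : ℝ :=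
  (∑ σ, v x σ * pd σ (fun y => curv Γ y α β μ ν) x)
  - (∑ σ, curv Γ x σ β μ ν * pd σ (fun y => v y α) x)
  + (∑ σ, curv Γ x α σ μ ν * pd β (fun y => v y σ) x)
  + (∑ σ, curv Γ x α β σ ν * pd μ (fun y => v y σ) x)
  + (∑ σ, curv Γ x α β μ σ * pd ν (fun y => v y σ) x)


open Filter in
lemma pd_add {f g : Vec4 → ℝ} {x : Vec4} (hf : DifferentiableAt ℝ f x)
    (hg : DifferentiableAt ℝ g x) (μ : Fin 4) :
    pd μ (fun y => f y + g y) x = pd μ f x + pd μ g x := by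
  unfold pd; rw [fderiv_fun_add hf hg]; rfl

lemma pd_sub {f g : Vec4 → ℝ} {x : Vec4} (hf : DifferentiableAt ℝ f x)
    (hg : DifferentiableAt ℝ g x) (μ : Fin 4) :
    pd μ (fun y => f y - g y) x = pd μ f x - pd μ g x := by
  unfold pd; rw [fderiv_fun_sub hf hg]; rfl

lemma pd_mul {f g : Vec4 → ℝ} {x : Vec4} (hf : DifferentiableAt ℝ f x)
    (hg : DifferentiableAt ℝ g x) (μ : Fin 4) :
    pd μ (fun y => f y * g y) x = f x * pd μ g x + g x * pd μ f x := by
  unfold pd; rw [fderiv_fun_mul hf hg]; simp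

lemma contDiffOn_pd {f : Vec4 → ℝ} {U : Set Vec4} (hU : IsOpen U)
    (hf : ContDiffOn ℝ (⊤ : ℕ∞) f U) (μ : Fin 4) : ContDiffOn ℝ (⊤ : ℕ∞) (pd μ f) U := by
  have h := hf.fderiv_of_isOpen hU (m := (⊤ : ℕ∞)) (by simp)
  exact h.clm_apply contDiffOn_const

lemma diffAt_of_contDiffOn {f : Vec4 → ℝ} {U : Set Vec4} (hU : IsOpen U)
    (hf : ContDiffOn ℝ (⊤ : ℕ∞) f U) {x : Vec4} (hx : x ∈ U) : DifferentiableAt ℝ f x :=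
  (hf.contDiffAt (hU.mem_nhds hx)).differentiableAt (by simp)

lemma pd_comm {f : Vec4 → ℝ} {U : Set Vec4} (hU : IsOpen U) (hf : ContDiffOn ℝ (⊤ : ℕ∞) f U)
    {x : Vec4} (hx : x ∈ U) (μ ν : Fin 4) :
    pd μ (pd ν f) x = pd ν (pd μ f) x := by
  have hca : ContDiffAt ℝ (⊤ : ℕ∞) f x := hf.contDiffAt (hU.mem_nhds hx)
  have hsym : IsSymmSndFDerivAt ℝ f x := hca.isSymmSndFDerivAt (by rw [minSmoothness_of_isRCLikeNormedField]; exact WithTop.coe_le_coe.mpr le_top)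
  have hd : DifferentiableAt ℝ (fderiv ℝ f) x := by
    have := (hf.fderiv_of_isOpen hU (m := (⊤ : ℕ∞)) (by simp)).contDiffAt (hU.mem_nhds hx)
    exact this.differentiableAt (by simp)
  have key : ∀ a b : Fin 4, pd a (pd b f) x
      = fderiv ℝ (fderiv ℝ f) x (Pi.single a 1) (Pi.single b 1) := by
    intro a b
    unfold pd
    rw [fderiv_clm_apply hd (differentiableAt_const _)]
    simp
  rw [key, key, hsym]

set_option maxHeartbeats 4000000 in
/-- Lie invariance of the curvature: if ℒ_v Γ = 0 on `U` then ℒ_v R = 0 on `U`. -/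
theorem lie_invariance_of_curvature
    (U : Set Vec4) (hU : IsOpen U) (hne : U.Nonempty)
    (v : Tens1) (Γ : Tens3)
    (hvs : Smooth1 v U) (hΓs : Smooth3 Γ U)
    (hlie : ∀ x ∈ U, ∀ α μ ν, lieConn v Γ x α μ ν = 0) :
    ∀ x ∈ U, ∀ α β μ ν, lieCurv v Γ x α β μ ν = 0 := by
  intro x hx α β μ ν
  have hnx := hU.mem_nhds hx
  have hΓd : ∀ a b c, DifferentiableAt ℝ (fun y => Γ y a b c) x :=
    fun a b c => diffAt_of_contDiffOn hU (hΓs a b c) hx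
  have hvd : ∀ a, DifferentiableAt ℝ (fun y => v y a) x :=
    fun a => diffAt_of_contDiffOn hU (hvs a) hx
  have hdΓd : ∀ s a b c, DifferentiableAt ℝ (pd s (fun y => Γ y a b c)) x :=
    fun s a b c => diffAt_of_contDiffOn hU (contDiffOn_pd hU (hΓs a b c) s) hx
  have hdvd : ∀ s a, DifferentiableAt ℝ (pd s (fun y => v y a)) x :=
    fun s a => diffAt_of_contDiffOn hU (contDiffOn_pd hU (hvs a) s) hx
  have hddvd : ∀ s t a, DifferentiableAt ℝ (pd s (pd t (fun y => v y a))) x :=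
    fun s t a => diffAt_of_contDiffOn hU (contDiffOn_pd hU (contDiffOn_pd hU (hvs a) t) s) hx
  have hz : ∀ a b c m, pd m (fun y => lieConn v Γ y a b c) x = 0 := by
    intro a b c m
    have hev : (fun y => lieConn v Γ y a b c) =ᶠ[nhds x] (fun _ => (0:ℝ)) := by
      filter_upwards [hnx] with y hy using hlie y hy a b c
    unfold pd; rw [hev.fderiv_eq]; simp
  have hL : ∀ a b c, lieConn v Γ x a b c = 0 := hlie x hx
  simp only [lieConn, Fin.sum_univ_four] at hL
  have E1 := hz α ν β μ
  have E2 := hz α μ β ν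
  simp only [lieConn] at E1 E2
  simp (disch := fun_prop) only [Fin.sum_univ_four, pd_add, pd_sub, pd_mul] at E1 E2
  have W1 : ∀ s : Fin 4, pd s (pd μ (fun y => Γ y α ν β)) x
      = pd μ (pd s (fun y => Γ y α ν β)) x := fun s => pd_comm hU (hΓs α ν β) hx s μ
  have W2 : ∀ s : Fin 4, pd s (pd ν (fun y => Γ y α μ β)) x
      = pd ν (pd s (fun y => Γ y α μ β)) x := fun s => pd_comm hU (hΓs α μ β) hx s ν
  have W3 : ∀ s : Fin 4, pd μ (pd ν (fun y => v y s)) x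
      = pd ν (pd μ (fun y => v y s)) x := fun s => pd_comm hU (hvs s) hx μ ν
  have W4 : pd μ (pd ν (pd β (fun y => v y α))) x
      = pd ν (pd μ (pd β (fun y => v y α))) x :=
    pd_comm hU (contDiffOn_pd hU (hvs α) β) hx μ ν
  simp only [lieCurv, curv]
  simp (disch := fun_prop) only [Fin.sum_univ_four, pd_add, pd_sub, pd_mul]
  linear_combination (norm := ring1) E1 - E2
    + Γ x α μ 0 * hL 0 ν β + Γ x α μ 1 * hL 1 ν β + Γ x α μ 2 * hL 2 ν β + Γ x α μ 3 * hL 3 ν β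
    - Γ x α ν 0 * hL 0 μ β - Γ x α ν 1 * hL 1 μ β - Γ x α ν 2 * hL 2 μ β - Γ x α ν 3 * hL 3 μ β
    - Γ x 0 μ β * hL α ν 0 - Γ x 1 μ β * hL α ν 1 - Γ x 2 μ β * hL α ν 2 - Γ x 3 μ β * hL α ν 3
    + Γ x 0 ν β * hL α μ 0 + Γ x 1 ν β * hL α μ 1 + Γ x 2 ν β * hL α μ 2 + Γ x 3 ν β * hL α μ 3
    + v x 0 * W1 0 + v x 1 * W1 1 + v x 2 * W1 2 + v x 3 * W1 3
    - v x 0 * W2 0 - v x 1 * W2 1 - v x 2 * W2 2 - v x 3 * W2 3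
    - Γ x α 0 β * W3 0 - Γ x α 1 β * W3 1 - Γ x α 2 β * W3 2 - Γ x α 3 β * W3 3
    - W4
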